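/- arXiv:2402.14651 — 2 statements merged into one kernel-verified Lean document; each statement's English description precedes it below -/
import Mathlib

section
/- For any open-loop policy {π_t} with state sequence ρ_{t+1} = N(ρ_t ⊗ π_t), the state-action occupation operator σ = (1−β) Σ_{t≥0} β^t (ρ_t ⊗ π_t) satisfies Tr_A(σ) − β N(σ) = (1−β) ρ₀. -/
open Matrix
open scoped Kronecker ComplexOrder

noncomputable section

/-- A density operator: positive semidefinite with unit trace. -/
def IsDensity {n : Type*} [Fintype n] (ρ : Matrix n n ℂ) : Prop :=
  ρ.PosSemidef ∧ ρ.trace = 1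

/-- Partial trace over the second tensor factor. -/
def ptraceA {X A : Type*} [Fintype A] (M : Matrix (X × A) (X × A) ℂ) :
    Matrix X X ℂ :=
  Matrix.of fun x y => ∑ a, M (x, a) (y, a)

/-- A quantum channel given by a Kraus representation. -/
structure KrausChannel (d₁ d₂ : Type*) [Fintype d₁] [DecidableEq d₁] [Fintype d₂] where
  ι : Type
  [fin : Fintype ι]
  K : ι → Matrix d₂ d₁ ℂ
  sum_eq_one : ∑ l : ι, (K l)ᴴ * K l = 1

attribute [instance] KrausChannel.fin

/-- The action of a Kraus channel on operators. -/
def KrausChannel.apply {d₁ d₂ : Type*} [Fintype d₁] [DecidableEq d₁] [Fintype d₂]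
    (C : KrausChannel d₁ d₂) (σ : Matrix d₁ d₁ ℂ) : Matrix d₂ d₂ ℂ :=
  ∑ l : C.ι, C.K l * σ * (C.K l)ᴴ

/-- The state sequence generated by an open-loop policy `π` from `ρ0`. -/
def stateSeq {X A : Type*} [Fintype X] [DecidableEq X] [Fintype A] [DecidableEq A]
    (N : KrausChannel (X × A) X) (ρ0 : Matrix X X ℂ) (π : ℕ → Matrix A A ℂ) :
    ℕ → Matrix X X ℂ
  | 0 => ρ0
  | t + 1 => N.apply (stateSeq N ρ0 π t ⊗ₖ π t)

/-! Every `ρ_t` is a density operator, so its entries are bounded by `1` and the discounted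
series converges. `Tr_A` and `N` are linear, hence commute with the sum, and they send
`ρ_t ⊗ π_t` to `ρ_t` and `ρ_{t+1}` respectively; the two resulting series differ only by the
shift `t ↦ t + 1`, which leaves the single term `ρ₀`. -/

namespace Matrix.PosSemidef

theorem norm_apply_sq_le {𝕜 n : Type*} [RCLike 𝕜] {M : Matrix n n 𝕜} (hM : M.PosSemidef)
    (i j : n) : ‖M i j‖ ^ 2 ≤ ‖M i i‖ * ‖M j j‖ := by
  classical
  -- the `2 × 2` principal minor on the rows `i, j`
  have hdet := (hM.submatrix ![i, j]).det_nonneg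
  rw [det_fin_two] at hdet
  simp only [submatrix_apply, Matrix.cons_val_zero, Matrix.cons_val_one] at hdet
  rw [← hM.1.apply i j, norm_star, ← RCLike.ofReal_le_ofReal (K := 𝕜), RCLike.ofReal_pow,
    RCLike.ofReal_mul, RCLike.norm_of_nonneg' (hM.diag_nonneg (i := i)),
    RCLike.norm_of_nonneg' (hM.diag_nonneg (i := j)), ← RCLike.conj_mul, ← RCLike.star_def]
  rwa [hM.1.apply, ← sub_nonneg]

theorem norm_apply_le_norm_trace {𝕜 n : Type*} [RCLike 𝕜] [Fintype n] {M : Matrix n n 𝕜}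
    (hM : M.PosSemidef) (i j : n) : ‖M i j‖ ≤ ‖M.trace‖ := by
  have hdiag : ∀ k, ‖M k k‖ ≤ ‖M.trace‖ := fun k => by
    rw [← RCLike.ofReal_le_ofReal (K := 𝕜), RCLike.norm_of_nonneg' (hM.diag_nonneg (i := k)),
      RCLike.norm_of_nonneg' hM.trace_nonneg]
    exact Finset.single_le_sum (f := fun k => M k k) (fun k _ => hM.diag_nonneg)
      (Finset.mem_univ k)
  refine (pow_le_pow_iff_left₀ (norm_nonneg _) (norm_nonneg _) two_ne_zero).mp ?_
  calc ‖M i j‖ ^ 2 ≤ ‖M i i‖ * ‖M j j‖ := hM.norm_apply_sq_le i j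
    _ ≤ ‖M.trace‖ ^ 2 := by
      rw [sq]; exact mul_le_mul (hdiag i) (hdiag j) (norm_nonneg _) (norm_nonneg _)

end Matrix.PosSemidef

attribute [local instance] Matrix.normedAddCommGroup Matrix.normedSpace

namespace IsDensity

variable {m n : Type*} [Fintype m] [Fintype n] {ρ : Matrix m m ℂ} {π : Matrix n n ℂ}

theorem kronecker (hρ : IsDensity ρ) (hπ : IsDensity π) : IsDensity (ρ ⊗ₖ π) :=
  ⟨hρ.1.kronecker hπ.1, by rw [trace_kronecker, hρ.2, hπ.2, one_mul]⟩

theorem norm_le_one (hρ : IsDensity ρ) : ‖ρ‖ ≤ 1 :=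
  (norm_le_iff zero_le_one).2 fun i j => by
    simpa [hρ.2] using hρ.1.norm_apply_le_norm_trace i j

end IsDensity

namespace KrausChannel

variable {d₁ d₂ : Type*} [Fintype d₁] [DecidableEq d₁] [Fintype d₂] (C : KrausChannel d₁ d₂)

theorem trace_apply (σ : Matrix d₁ d₁ ℂ) : (C.apply σ).trace = σ.trace := by
  simp_rw [KrausChannel.apply, trace_sum, trace_mul_cycle (C.K _), ← trace_sum, ← Finset.sum_mul,
    C.sum_eq_one, Matrix.one_mul]

theorem posSemidef_apply {σ : Matrix d₁ d₁ ℂ} (hσ : σ.PosSemidef) : (C.apply σ).PosSemidef :=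
  posSemidef_sum _ fun l _ => hσ.mul_mul_conjTranspose_same (C.K l)

theorem isDensity_apply {σ : Matrix d₁ d₁ ℂ} (hσ : IsDensity σ) : IsDensity (C.apply σ) :=
  ⟨C.posSemidef_apply hσ.1, by rw [trace_apply, hσ.2]⟩

def toLinearMap : Matrix d₁ d₁ ℂ →ₗ[ℂ] Matrix d₂ d₂ ℂ where
  toFun := C.apply
  map_add' M P := by
    simp only [KrausChannel.apply, Matrix.mul_add, Matrix.add_mul, Finset.sum_add_distrib]
  map_smul' c M := by
    simp only [KrausChannel.apply, Matrix.mul_smul, Matrix.smul_mul, Finset.smul_sum,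
      RingHom.id_apply]

end KrausChannel

theorem isDensity_stateSeq {X A : Type*} [Fintype X] [DecidableEq X] [Fintype A] [DecidableEq A]
    (N : KrausChannel (X × A) X) {ρ0 : Matrix X X ℂ} (hρ0 : IsDensity ρ0)
    {π : ℕ → Matrix A A ℂ} (hπ : ∀ t, IsDensity (π t)) (t : ℕ) :
    IsDensity (stateSeq N ρ0 π t) := by
  induction t with
  | zero => exact hρ0
  | succ t ih => exact N.isDensity_apply (ih.kronecker (hπ t))

theorem ptraceA_kronecker {X A : Type*} [Fintype A] (ρ : Matrix X X ℂ) (π : Matrix A A ℂ) :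
    ptraceA (ρ ⊗ₖ π) = π.trace • ρ := by
  ext x y
  simp only [ptraceA, of_apply, kroneckerMap_apply, Matrix.smul_apply, trace, diag_apply,
    smul_eq_mul, ← Finset.mul_sum, mul_comm]

def ptraceALinearMap (X A : Type*) [Fintype A] :
    Matrix (X × A) (X × A) ℂ →ₗ[ℂ] Matrix X X ℂ where
  toFun := ptraceA
  map_add' M P := by
    ext x y
    simp only [ptraceA, of_apply, Matrix.add_apply, Finset.sum_add_distrib]
  map_smul' c M := by
    ext x y
    simp only [ptraceA, of_apply, Matrix.smul_apply, smul_eq_mul, Finset.mul_sum, RingHom.id_apply]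

theorem summable_pow_smul_of_norm_le {E : Type*} [SeminormedAddCommGroup E] [NormedSpace ℝ E]
    [CompleteSpace E] {β C : ℝ} (hβ0 : 0 ≤ β) (hβ1 : β < 1) {x : ℕ → E} (hx : ∀ t, ‖x t‖ ≤ C) :
    Summable fun t => β ^ t • x t :=
  .of_norm_bounded ((summable_geometric_of_lt_one hβ0 hβ1).mul_right C) fun t => by
    rw [norm_smul, norm_pow, Real.norm_of_nonneg hβ0]
    exact mul_le_mul_of_nonneg_left (hx t) (pow_nonneg hβ0 t)

theorem tsum_discounted_telescope {R E F : Type*} [Semiring R] [AddCommMonoid E] [Module R E]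
    [TopologicalSpace E] [AddCommGroup F] [Module R F] [TopologicalSpace F]
    [IsTopologicalAddGroup F] [T2Space F] [ContinuousConstSMul R F]
    (P T : E →L[R] F) {x : ℕ → E} {y : ℕ → F} (hP : ∀ t, P (x t) = y t)
    (hT : ∀ t, T (x t) = y (t + 1)) {β : R} (hx : Summable fun t => β ^ t • x t) :
    P (∑' t, β ^ t • x t) - β • T (∑' t, β ^ t • x t) = y 0 := by
  have hPx : ∀ t, P (β ^ t • x t) = β ^ t • y t := fun t => by rw [map_smul, hP]
  have hTx : ∀ t, T (β ^ t • x t) = β ^ t • y (t + 1) := fun t => by rw [map_smul, hT]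
  have hy : Summable fun t => β ^ t • y t := by simpa only [hPx] using hx.mapL P
  have hy' : Summable fun t => β ^ t • y (t + 1) := by simpa only [hTx] using hx.mapL T
  rw [P.map_tsum hx, T.map_tsum hx]
  simp only [hPx, hTx]
  rw [hy.tsum_eq_zero_add, ← hy'.tsum_const_smul]
  simp only [pow_zero, one_smul, smul_smul, ← pow_succ', add_sub_cancel_right]

/-- The state-action occupation operator
`σ = (1−β) ∑ β^t (ρ_t ⊗ π_t)` of an open-loop policy satisfies
`Tr_A σ − β N(σ) = (1−β) ρ₀`. -/
theorem occupation_constraint_open_loop {X A : Type*} [Fintype X] [DecidableEq X]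
    [Fintype A] [DecidableEq A]
    (N : KrausChannel (X × A) X) (β : ℝ) (hβ0 : 0 ≤ β) (hβ1 : β < 1)
    (ρ0 : Matrix X X ℂ) (hρ0 : IsDensity ρ0)
    (π : ℕ → Matrix A A ℂ) (hπ : ∀ t, IsDensity (π t))
    (σ : Matrix (X × A) (X × A) ℂ)
    (hσ : σ = (1 - β) • ∑' t : ℕ, β ^ t • (stateSeq N ρ0 π t ⊗ₖ π t)) :
    ptraceA σ - β • N.apply σ = (1 - β) • ρ0 := by
  set ρ := stateSeq N ρ0 π
  have hρ : ∀ t, IsDensity (ρ t) := isDensity_stateSeq N hρ0 hπ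
  let P := ((ptraceALinearMap X A).restrictScalars ℝ).toContinuousLinearMap
  let T := (N.toLinearMap.restrictScalars ℝ).toContinuousLinearMap
  have hP : ∀ t, P (ρ t ⊗ₖ π t) = ρ t := fun t => by
    change ptraceA _ = _
    rw [ptraceA_kronecker, (hπ t).2, one_smul]
  have hsum : Summable fun t => β ^ t • (ρ t ⊗ₖ π t) :=
    summable_pow_smul_of_norm_le hβ0 hβ1 fun t => ((hρ t).kronecker (hπ t)).norm_le_one
  calc ptraceA σ - β • N.apply σ
      = (1 - β) • (P (∑' t, β ^ t • (ρ t ⊗ₖ π t)) - β • T (∑' t, β ^ t • (ρ t ⊗ₖ π t))) := by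
        rw [hσ, smul_sub, smul_comm (1 - β) β]
        exact congrArg₂ _ (map_smul P _ _) (congrArg _ (map_smul T _ _))
    _ = (1 - β) • ρ0 := by
        rw [tsum_discounted_telescope P T hP (fun t => rfl) hsum]
        rfl
end
end

section
/- Suppose ξ is a Hermitian operator on H_X satisfying the feasibility condition c + β N†(N_qc(ξ)) ⪰ N_qc(ξ) ⊗ Id (Löwner order). Then for every quantum channel γ with N_qc ∘ Tr_A ∘ γ = N_qc on D(H_X) and every density operator ρ, one has ⟨c + β N†(N_qc(ξ)), γ(ρ)⟩ ≥ ⟨N_qc(ξ), ρ⟩. -/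
open Matrix
open scoped Kronecker ComplexOrder

noncomputable section

/-- The quantum-to-classical channel. -/
def Nqc {X : Type*} [Fintype X] [DecidableEq X] (M : Matrix X X ℂ) :
    Matrix X X ℂ :=
  Matrix.diagonal fun x => M x x

/-- The adjoint (dual) of a Kraus channel. -/
def adjChannel {d₁ d₂ : Type*} [Fintype d₁] [DecidableEq d₁] [Fintype d₂]
    (C : KrausChannel d₁ d₂) (η : Matrix d₂ d₂ ℂ) : Matrix d₁ d₁ ℂ :=
  ∑ l : C.ι, (C.K l)ᴴ * η * C.K l

/-!
Write `c + β N†(N_qc ξ) = M + N_qc(ξ) ⊗ Id` with `M ⪰ 0`. Since `γ(ρ) ⪰ 0`, the pairing of `M` with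
`γ(ρ)` is nonnegative. The pairing of `N_qc(ξ) ⊗ Id` with `γ(ρ)` is the pairing of the diagonal
matrix `N_qc(ξ)` with `Tr_A γ(ρ)`, which only sees the diagonal of `Tr_A γ(ρ)`, and by the
constraint on `γ` that diagonal is the diagonal of `ρ`.
-/

open scoped MatrixOrder in
theorem Matrix.PosSemidef.trace_mul_nonneg {n 𝕜 : Type*} [Fintype n] [DecidableEq n] [RCLike 𝕜]
    {A B : Matrix n n 𝕜} (hA : A.PosSemidef) (hB : B.PosSemidef) : 0 ≤ (A * B).trace := by
  obtain ⟨S, rfl⟩ := CStarAlgebra.nonneg_iff_eq_star_mul_self.mp hB.nonneg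
  rw [star_eq_conjTranspose, ← Matrix.mul_assoc, trace_mul_cycle]
  exact (hA.mul_mul_conjTranspose_same S).trace_nonneg

theorem KrausChannel.apply_posSemidef {d₁ d₂ : Type*} [Fintype d₁] [DecidableEq d₁] [Fintype d₂]
    (C : KrausChannel d₁ d₂) {σ : Matrix d₁ d₁ ℂ} (hσ : σ.PosSemidef) :
    (C.apply σ).PosSemidef :=
  Matrix.posSemidef_sum _ fun l _ => hσ.mul_mul_conjTranspose_same (C.K l)

theorem trace_kronecker_one_mul_eq_trace_mul_ptraceA {X A : Type*} [Fintype X] [Fintype A]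
    [DecidableEq A] (B : Matrix X X ℂ) (M : Matrix (X × A) (X × A) ℂ) :
    ((B ⊗ₖ (1 : Matrix A A ℂ)) * M).trace = (B * ptraceA M).trace := by
  simp only [trace, diag, mul_apply, ptraceA, of_apply, kroneckerMap_apply, one_apply,
    Fintype.sum_prod_type, mul_ite, mul_one, mul_zero, ite_mul, zero_mul,
    Finset.sum_ite_eq, Finset.mem_univ, if_true, Finset.mul_sum]
  exact Finset.sum_congr rfl fun _ _ => Finset.sum_comm

theorem trace_Nqc_mul_eq_of_Nqc_eq {X : Type*} [Fintype X] [DecidableEq X]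
    (ξ : Matrix X X ℂ) {S T : Matrix X X ℂ} (h : Nqc S = Nqc T) :
    (Nqc ξ * S).trace = (Nqc ξ * T).trace := by
  have hdiag : ∀ x, S x x = T x x := fun x => by
    simpa [Nqc] using congrFun (congrFun h x) x
  simp only [Nqc, trace, diag, diagonal_mul, hdiag]

theorem feasibility_lower_bound_general {X A : Type*}
    [Fintype X] [DecidableEq X] [Fintype A] [DecidableEq A]
    (c : Matrix (X × A) (X × A) ℂ)
    (N : KrausChannel (X × A) X) (β : ℝ)
    (ξ : Matrix X X ℂ)
    (hfeas : (c + β • adjChannel N (Nqc ξ)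
        - (Nqc ξ) ⊗ₖ (1 : Matrix A A ℂ)).PosSemidef) :
    ∀ γ : KrausChannel X (X × A),
      (∀ ρ : Matrix X X ℂ, IsDensity ρ → Nqc (ptraceA (γ.apply ρ)) = Nqc ρ) →
      ∀ ρ : Matrix X X ℂ, IsDensity ρ →
        ((Nqc ξ * ρ).trace.re) ≤
          (((c + β • adjChannel N (Nqc ξ)) * γ.apply ρ).trace.re) := by
  intro γ hγ ρ hρ
  set F := c + β • adjChannel N (Nqc ξ)
  have hslack : 0 ≤ ((F - Nqc ξ ⊗ₖ (1 : Matrix A A ℂ)) * γ.apply ρ).trace :=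
    hfeas.trace_mul_nonneg (γ.apply_posSemidef hρ.1)
  have hmarginal : ((Nqc ξ ⊗ₖ (1 : Matrix A A ℂ)) * γ.apply ρ).trace = (Nqc ξ * ρ).trace := by
    rw [trace_kronecker_one_mul_eq_trace_mul_ptraceA, trace_Nqc_mul_eq_of_Nqc_eq ξ (hγ ρ hρ)]
  rw [sub_mul, trace_sub, hmarginal, sub_nonneg] at hslack
  exact (Complex.le_def.mp hslack).1

/-- If Hermitian `ξ` satisfies the Löwner-order feasibility
condition `c + β N†(N_qc ξ) ⪰ N_qc(ξ) ⊗ Id`, then for every channel `γ` with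
`N_qc ∘ Tr_A ∘ γ = N_qc` on densities and every density `ρ`,
`⟨c + β N†(N_qc ξ), γ(ρ)⟩ ≥ ⟨N_qc ξ, ρ⟩`. -/
theorem feasibility_lower_bound {X A : Type*}
    [Fintype X] [DecidableEq X] [Fintype A] [DecidableEq A]
    (c : Matrix (X × A) (X × A) ℂ) (hc : c.IsHermitian)
    (N : KrausChannel (X × A) X) (β : ℝ) (hβ0 : 0 ≤ β) (hβ1 : β < 1)
    (ξ : Matrix X X ℂ) (hξ : ξ.IsHermitian)
    (hfeas : (c + β • adjChannel N (Nqc ξ)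
        - (Nqc ξ) ⊗ₖ (1 : Matrix A A ℂ)).PosSemidef) :
    ∀ γ : KrausChannel X (X × A),
      (∀ ρ : Matrix X X ℂ, IsDensity ρ → Nqc (ptraceA (γ.apply ρ)) = Nqc ρ) →
      ∀ ρ : Matrix X X ℂ, IsDensity ρ →
        ((Nqc ξ * ρ).trace.re) ≤
          (((c + β • adjChannel N (Nqc ξ)) * γ.apply ρ).trace.re) :=
  feasibility_lower_bound_general c N β ξ hfeas
end
end
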